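/- arXiv:2203.13073 — 8 statements merged into one kernel-verified Lean document; each statement's English description precedes it below -/
import Mathlib

section
/- There exists an absolute constant K > 0 such that for all integers n ≥ 2 and ℓ ≥ 1 and all functions f : {0,1}^n → {0,1} and g : {0,1}^ℓ × {0,1}^ℓ → {0,1}, the 0,1 matrix M associated with the composed function f∘gⁿ satisfies ⌈log₂ Rbin(M)⌉ ≤ K · UC₁(f) · max(log₂ n, ℓ). -/
/-- A partition of the ones of a `0,1` matrix `M` into `k` monochromatic
combinatorial rectangles `A t × B t`. -/
def OnesPartition {α β : Type*} (M : α → β → Bool) (k : ℕ)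
    (A : Fin k → Set α) (B : Fin k → Set β) : Prop :=
  (∀ t, ∀ x ∈ A t, ∀ y ∈ B t, M x y = true) ∧
  ∀ x y, M x y = true → ∃! t, x ∈ A t ∧ y ∈ B t

/-- The binary rank of a `0,1` matrix. -/
noncomputable def Rbin {α β : Type*} (M : α → β → Bool) : ℕ :=
  sInf {k | ∃ A B, OnesPartition M k A B}

/-- The composed function `f ∘ gⁿ`, where inputs in `{0,1}^{ℓ·n}` are viewed as
`n` blocks of length `ℓ`. -/
def composed {n ℓ : ℕ} (f : (Fin n → Bool) → Bool)
    (g : (Fin ℓ → Bool) → (Fin ℓ → Bool) → Bool) :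
    (Fin n → Fin ℓ → Bool) → (Fin n → Fin ℓ → Bool) → Bool :=
  fun x y => f fun i => g (x i) (y i)

/-- `f` can be written as a `k`-DNF formula: a disjunction of `m` conjunctions,
the `j`-th conjunction requiring the variables in `I j` (at most `k` of them) to
take the values prescribed by `v j`. -/
def IsDNF {n : ℕ} (f : (Fin n → Bool) → Bool) (k : ℕ)
    (m : ℕ) (I : Fin m → Finset (Fin n)) (v : Fin m → Fin n → Bool) : Prop :=
  (∀ j, (I j).card ≤ k) ∧
  ∀ z, f z = true ↔ ∃ j, ∀ i ∈ I j, z i = v j i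

/-- An unambiguous `k`-DNF: every input satisfies at most one conjunction. -/
def IsUnambiguousDNF {n : ℕ} (f : (Fin n → Bool) → Bool) (k : ℕ)
    (m : ℕ) (I : Fin m → Finset (Fin n)) (v : Fin m → Fin n → Bool) : Prop :=
  IsDNF f k m I v ∧
  ∀ (z : Fin n → Bool) (j j' : Fin m), (∀ i ∈ I j, z i = v j i) → (∀ i ∈ I j', z i = v j' i) → j = j'

/-- The unambiguous 1-certificate complexity `UC₁(f)`: the smallest `k` for which
`f` can be written as an unambiguous `k`-DNF formula. -/
noncomputable def UC1 {n : ℕ} (f : (Fin n → Bool) → Bool) : ℕ :=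
  sInf {k | ∃ m I v, IsUnambiguousDNF f k m I v}

/-!
Take an unambiguous `k`-DNF for `f` with `m` terms, `k = UC₁(f)`. The ones of `f ∘ gⁿ` are
partitioned by the rectangles indexed by a term `j` and a value `a` of the `x`-blocks on the
variables of `j`: `x` agrees with `a` there, and `y` makes every `g (aᵢ, yᵢ)` equal to the literal
of `j`. Unambiguity makes this a partition, so `Rbin ≤ m · 2^(ℓk)`. Distinct terms have distinct
literal sets, so `m ≤ (2n+1)^k`, and `⌈log₂ Rbin⌉ ≤ k (log₂ n + ℓ + 3)`.
-/

open Finset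

theorem Rbin_le_card {α β ι : Type*} [Fintype ι] (M : α → β → Bool)
    (A : ι → Set α) (B : ι → Set β)
    (hmono : ∀ t, ∀ x ∈ A t, ∀ y ∈ B t, M x y = true)
    (hcover : ∀ x y, M x y = true → ∃! t, x ∈ A t ∧ y ∈ B t) :
    Rbin M ≤ Fintype.card ι := by
  let e := Fintype.equivFin ι
  refine Nat.sInf_le ⟨A ∘ e.symm, B ∘ e.symm, fun t => hmono (e.symm t), fun x y hxy => ?_⟩
  obtain ⟨t, ht, huniq⟩ := hcover x y hxy
  exact ⟨e t, by simpa using ht, fun s hs => e.symm_apply_eq.mp (huniq _ hs)⟩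

theorem card_filter_card_le_le_pow {α : Type*} [Fintype α] [DecidableEq α] (k : ℕ) :
    #{s : Finset α | #s ≤ k} ≤ (Fintype.card α + 1) ^ k := by
  have hsurj : ({s : Finset α | #s ≤ k} : Finset (Finset α)) ⊆
      univ.image fun c : Fin k → Option α => ({a | ∃ t, c t = some a} : Finset α) := by
    intro s hs
    have hlen : s.toList.length ≤ k := by simpa using (mem_filter.mp hs).2
    refine mem_image.mpr ⟨fun t => s.toList[(t : ℕ)]?, mem_univ _, ?_⟩
    ext a
    simp only [mem_filter, mem_univ, true_and]
    rw [← mem_toList, List.mem_iff_getElem?]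
    exact ⟨fun ⟨t, ht⟩ => ⟨t, ht⟩, fun ⟨t, ht⟩ =>
      ⟨⟨t, (List.getElem?_eq_some_iff.mp ht).1.trans_le hlen⟩, ht⟩⟩
  calc _ ≤ _ := card_le_card hsurj
    _ ≤ _ := card_image_le
    _ = _ := by simp

namespace IsUnambiguousDNF

variable {n k m : ℕ} {f : (Fin n → Bool) → Bool} {I : Fin m → Finset (Fin n)}
  {v : Fin m → Fin n → Bool}

theorem literals_injective (h : IsUnambiguousDNF f k m I v) :
    Function.Injective fun j => (I j).image fun i => (i, v j i) := by
  intro j j' hjj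
  have hlit : ∀ i ∈ I j', i ∈ I j ∧ v j i = v j' i := by
    intro i hi
    have : (i, v j' i) ∈ (I j).image fun i => (i, v j i) := by
      simp only at hjj
      exact hjj ▸ mem_image_of_mem _ hi
    obtain ⟨i', hi', hii'⟩ := mem_image.mp this
    simp only [Prod.mk.injEq] at hii'
    obtain ⟨rfl, hv⟩ := hii'
    exact ⟨hi', hv⟩
  refine h.2 (fun i => if i ∈ I j then v j i else false) j j' (fun i hi => if_pos hi)
    fun i hi => ?_
  simp [hlit i hi]

theorem card_le (h : IsUnambiguousDNF f k m I v) : m ≤ (2 * n + 1) ^ k := by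
  classical
  let lits : Fin m → {s : Finset (Fin n × Bool) // #s ≤ k} :=
    fun j => ⟨(I j).image fun i => (i, v j i), card_image_le.trans (h.1.1 j)⟩
  have hlits : Function.Injective lits := fun j j' hjj =>
    h.literals_injective (congrArg Subtype.val hjj)
  calc m = Fintype.card (Fin m) := (Fintype.card_fin m).symm
    _ ≤ Fintype.card {s : Finset (Fin n × Bool) // #s ≤ k} :=
      Fintype.card_le_of_injective lits hlits
    _ ≤ (Fintype.card (Fin n × Bool) + 1) ^ k := by
      rw [Fintype.card_subtype]
      exact card_filter_card_le_le_pow k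
    _ = (2 * n + 1) ^ k := by simp [mul_comm]

end IsUnambiguousDNF

theorem exists_isUnambiguousDNF {n : ℕ} (f : (Fin n → Bool) → Bool) :
    ∃ m I v, IsUnambiguousDNF f n m I v := by
  let e := Fintype.equivFin {z // f z = true}
  have hsat : ∀ j (z : Fin n → Bool),
      (∀ i ∈ (univ : Finset (Fin n)), z i = (e.symm j).1 i) ↔ z = e.symm j :=
    fun j z => by simp [funext_iff]
  refine ⟨_, fun _ => univ, fun j => (e.symm j).1, ⟨fun _ => by simp, fun z => ?_⟩,
    fun z j j' hj hj' => ?_⟩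
  · simp only [hsat]
    exact ⟨fun hz => ⟨e ⟨z, hz⟩, by simp⟩, fun ⟨j, hj⟩ => hj ▸ (e.symm j).2⟩
  · rw [hsat] at hj hj'
    exact e.symm.injective (Subtype.ext (hj.symm.trans hj'))

theorem exists_isUnambiguousDNF_UC1 {n : ℕ} (f : (Fin n → Bool) → Bool) :
    ∃ m I v, IsUnambiguousDNF f (UC1 f) m I v :=
  Nat.sInf_mem (s := {k | ∃ m I v, IsUnambiguousDNF f k m I v}) ⟨n, exists_isUnambiguousDNF f⟩

theorem IsUnambiguousDNF.Rbin_composed_le {n ℓ k m : ℕ} {f : (Fin n → Bool) → Bool}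
    {I : Fin m → Finset (Fin n)} {v : Fin m → Fin n → Bool}
    (h : IsUnambiguousDNF f k m I v) (g : (Fin ℓ → Bool) → (Fin ℓ → Bool) → Bool) :
    Rbin (composed f g) ≤ m * 2 ^ (ℓ * k) := by
  obtain ⟨⟨hcard, hsat⟩, huniq⟩ := h
  let A : (Σ j, I j → Fin ℓ → Bool) → Set (Fin n → Fin ℓ → Bool) :=
    fun ⟨j, a⟩ => {x | ∀ i : I j, x i = a i}
  let B : (Σ j, I j → Fin ℓ → Bool) → Set (Fin n → Fin ℓ → Bool) :=
    fun ⟨j, a⟩ => {y | ∀ i : I j, g (a i) (y i) = v j i}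
  have hterm : ∀ j a x y, x ∈ A ⟨j, a⟩ → y ∈ B ⟨j, a⟩ →
      ∀ i ∈ I j, g (x i) (y i) = v j i := fun j a x y hx hy i hi => by
    rw [hx ⟨i, hi⟩]
    exact hy ⟨i, hi⟩
  calc Rbin (composed f g) ≤ Fintype.card (Σ j, I j → Fin ℓ → Bool) := by
        refine Rbin_le_card _ A B (fun ⟨j, a⟩ x hx y hy => (hsat _).mpr ⟨j, hterm j a x y hx hy⟩)
          fun x y hxy => ?_
        obtain ⟨j, hj⟩ := (hsat _).mp hxy
        refine ⟨⟨j, fun i => x i⟩, ⟨fun _ => rfl, fun i => hj i i.2⟩, fun ⟨j', a'⟩ ⟨hx, hy⟩ => ?_⟩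
        obtain rfl := huniq _ j' j (hterm j' a' x y hx hy) hj
        exact Sigma.ext rfl (heq_of_eq (funext fun i => (hx i).symm))
    _ = ∑ j, (2 ^ ℓ) ^ #(I j) := by simp [Fintype.card_sigma]
    _ ≤ ∑ _j : Fin m, 2 ^ (ℓ * k) := sum_le_sum fun j _ => by
        rw [← pow_mul]
        exact Nat.pow_le_pow_right two_pos (Nat.mul_le_mul_left ℓ (hcard j))
    _ = m * 2 ^ (ℓ * k) := by simp

theorem Rbin_composed_le_two_pow {n ℓ : ℕ} (f : (Fin n → Bool) → Bool)
    (g : (Fin ℓ → Bool) → (Fin ℓ → Bool) → Bool) :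
    Rbin (composed f g) ≤ 2 ^ ((Nat.clog 2 n + 2 + ℓ) * UC1 f) := by
  obtain ⟨m, I, v, h⟩ := exists_isUnambiguousDNF_UC1 f
  have hn : 2 * n + 1 ≤ 2 ^ (Nat.clog 2 n + 2) := by
    have := Nat.le_pow_clog one_lt_two n
    have := Nat.one_le_two_pow (n := Nat.clog 2 n)
    rw [pow_add]
    omega
  calc Rbin (composed f g) ≤ m * 2 ^ (ℓ * UC1 f) := h.Rbin_composed_le g
    _ ≤ (2 ^ (Nat.clog 2 n + 2)) ^ UC1 f * 2 ^ (ℓ * UC1 f) :=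
      Nat.mul_le_mul_right _ (h.card_le.trans (Nat.pow_le_pow_left hn _))
    _ = 2 ^ ((Nat.clog 2 n + 2 + ℓ) * UC1 f) := by rw [← pow_mul, ← pow_add]; ring_nf

theorem clog_add_le_five_mul_max {n ℓ : ℕ} (hn : 2 ≤ n) (hℓ : 1 ≤ ℓ) :
    (Nat.clog 2 n + 2 + ℓ : ℝ) ≤ 5 * max (Real.logb 2 n) ℓ := by
  have hclog : (Nat.clog 2 n : ℝ) < Real.logb 2 n + 1 := by
    rw [← Real.natCeil_logb_natCast]
    exact Nat.ceil_lt_add_one (Real.logb_nonneg one_lt_two (by exact_mod_cast hn.trans' one_le_two))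
  have hlog : 1 ≤ Real.logb 2 n := by
    rw [Real.le_logb_iff_rpow_le one_lt_two (by positivity)]
    exact_mod_cast hn
  have hℓ' : (1 : ℝ) ≤ ℓ := by exact_mod_cast hℓ
  linarith [le_max_left (Real.logb 2 n) ℓ, le_max_right (Real.logb 2 n) (ℓ : ℝ)]

/-- There is an absolute constant `K > 0` such that for all `n ≥ 2`, `ℓ ≥ 1`, `f`, `g`,
the matrix `M` of `f ∘ gⁿ` satisfies `⌈log₂ Rbin M⌉ ≤ K * UC₁(f) * max (log₂ n) ℓ`. -/
theorem stmt3 :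
    ∃ K : ℝ, 0 < K ∧
      ∀ (n ℓ : ℕ), 2 ≤ n → 1 ≤ ℓ →
        ∀ (f : (Fin n → Bool) → Bool)
          (g : (Fin ℓ → Bool) → (Fin ℓ → Bool) → Bool),
          (Nat.clog 2 (Rbin (composed f g)) : ℝ)
            ≤ K * (UC1 f : ℝ) * max (Real.logb 2 n) (ℓ : ℝ) := by
  refine ⟨5, by norm_num, fun n ℓ hn hℓ f g => ?_⟩
  have hclog : Nat.clog 2 (Rbin (composed f g)) ≤ (Nat.clog 2 n + 2 + ℓ) * UC1 f :=
    (Nat.clog_le_iff_le_pow one_lt_two).mpr (Rbin_composed_le_two_pow f g)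
  calc (Nat.clog 2 (Rbin (composed f g)) : ℝ) ≤ (Nat.clog 2 n + 2 + ℓ) * UC1 f := by
        exact_mod_cast hclog
    _ ≤ 5 * max (Real.logb 2 n) ℓ * UC1 f :=
      mul_le_mul_of_nonneg_right (clog_add_le_five_mul_max hn hℓ) (Nat.cast_nonneg _)
    _ = 5 * UC1 f * max (Real.logb 2 n) ℓ := by ring
end

section
/- For every integer ℓ ≥ 1, the function g_ℓ defined by g_ℓ(x,y) = x₁ + y₁ + Σ_{i=2}^{ℓ} x_i·y_i (mod 2) satisfies disc(g_ℓ) ≤ 2^{−(ℓ+3)/2}. -/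
/-!
Split off the first bit: `x = (a, x')`, `y = (b, y')`. Then
`(-1)^{g_ℓ(x,y)} = (-1)^a (-1)^b (-1)^{⟨x',y'⟩}`, so the signed count of `g_ℓ` over `A × B` is
`uᵀ H v`, where `H` is the Walsh–Hadamard matrix of size `2^{ℓ-1}` and
`u(x') = 1_A(0,x') - 1_A(1,x')` (similarly `v` for `B`) takes values in `{-1, 0, 1}`.
As `HᵀH = 2^{ℓ-1} I`, Cauchy–Schwarz gives Lindsey's bound
`|uᵀ H v| ≤ 2^{(ℓ-1)/2} ‖u‖ ‖v‖ ≤ 2^{3(ℓ-1)/2}`; dividing by `4^ℓ` yields `2^{-(ℓ+3)/2}`.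
-/

/-- The gadget `g_ℓ(x,y) = x₁ + y₁ + Σ_{i=2}^{ℓ} x_i·y_i (mod 2)` (coordinates
indexed by `Fin ℓ`, with `x₁` corresponding to index `0`). -/
def gl (ℓ : ℕ) (hℓ : 0 < ℓ) (x y : Fin ℓ → Bool) : Bool :=
  decide ((((x ⟨0, hℓ⟩).toNat + (y ⟨0, hℓ⟩).toNat +
    ∑ i ∈ Finset.univ.filter (fun i : Fin ℓ => 1 ≤ (i : ℕ)),
      (x i).toNat * (y i).toNat) % 2) = 1)

/-- The discrepancy of `g` (with respect to the uniform distribution) on the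
combinatorial rectangle `A × B`. -/
noncomputable def discR {Λ : Type*} [Fintype Λ] [DecidableEq Λ] (g : Λ → Λ → Bool)
    (A B : Finset Λ) : ℝ :=
  |((((A ×ˢ B).filter fun p => g p.1 p.2 = false).card : ℝ) -
      (((A ×ˢ B).filter fun p => g p.1 p.2 = true).card : ℝ))| /
    ((Fintype.card Λ : ℝ) * (Fintype.card Λ : ℝ))

open Finset

section Walsh

variable {ι : Type*} [Fintype ι]

noncomputable def walsh (x y : ι → Bool) : ℝ := (-1) ^ ∑ i, (x i).toNat * (y i).toNat

lemma walsh_mul_walsh (x y z : ι → Bool) :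
    walsh x y * walsh x z =
      ∏ i, ((-1 : ℝ) ^ ((x i).toNat * (y i).toNat) * (-1) ^ ((x i).toNat * (z i).toNat)) := by
  simp only [walsh, ← prod_pow_eq_pow_sum, prod_mul_distrib]

variable [DecidableEq ι]

lemma sum_walsh_mul_walsh (y z : ι → Bool) :
    ∑ x, walsh x y * walsh x z = if y = z then 2 ^ Fintype.card ι else 0 := by
  have hcoord : ∀ i, ∑ b : Bool, (-1 : ℝ) ^ (b.toNat * (y i).toNat) * (-1) ^ (b.toNat * (z i).toNat)
      = if y i = z i then 2 else 0 := by
    intro i; cases y i <;> cases z i <;> norm_num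
  simp only [walsh_mul_walsh, ← Fintype.prod_sum
    (fun i (b : Bool) => (-1 : ℝ) ^ (b.toNat * (y i).toNat) * (-1) ^ (b.toNat * (z i).toNat)),
    hcoord, Fintype.prod_ite_zero, funext_iff, prod_const, card_univ]

lemma sum_sq_sum_mul_walsh (v : (ι → Bool) → ℝ) :
    ∑ x, (∑ y, v y * walsh x y) ^ 2 = 2 ^ Fintype.card ι * ∑ y, v y ^ 2 := by
  calc ∑ x, (∑ y, v y * walsh x y) ^ 2
      = ∑ y, ∑ z, v y * v z * ∑ x, walsh x y * walsh x z := by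
        simp_rw [sq, sum_mul_sum, mul_sum]
        rw [sum_comm]
        refine sum_congr rfl fun y _ => ?_
        rw [sum_comm]
        exact sum_congr rfl fun z _ => sum_congr rfl fun x _ => by ring
    _ = 2 ^ Fintype.card ι * ∑ y, v y ^ 2 := by
        simp [sum_walsh_mul_walsh, mul_sum, sq, mul_comm]

theorem sq_sum_sum_mul_walsh_le (u v : (ι → Bool) → ℝ) :
    (∑ x, ∑ y, u x * v y * walsh x y) ^ 2 ≤
      2 ^ Fintype.card ι * (∑ x, u x ^ 2) * ∑ y, v y ^ 2 := by
  calc (∑ x, ∑ y, u x * v y * walsh x y) ^ 2 = (∑ x, u x * ∑ y, v y * walsh x y) ^ 2 := by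
        simp only [mul_sum, mul_assoc]
    _ ≤ (∑ x, u x ^ 2) * ∑ x, (∑ y, v y * walsh x y) ^ 2 := sum_mul_sq_le_sq_mul_sq _ _ _
    _ = 2 ^ Fintype.card ι * (∑ x, u x ^ 2) * ∑ y, v y ^ 2 := by
        rw [sum_sq_sum_mul_walsh]; ring

end Walsh

lemma discR_eq_abs_sum {Λ : Type*} [Fintype Λ] [DecidableEq Λ] (g : Λ → Λ → Bool)
    (A B : Finset Λ) :
    discR g A B = |∑ p ∈ A ×ˢ B, (-1 : ℝ) ^ (g p.1 p.2).toNat| / (Fintype.card Λ : ℝ) ^ 2 := by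
  have hsign : ∀ b : Bool,
      (-1 : ℝ) ^ b.toNat = (if b = false then 1 else 0) - if b = true then 1 else 0 := by
    intro b; cases b <;> norm_num
  simp only [discR, sq, hsign, sum_sub_distrib, sum_boole]

section FirstBitSplit

variable {k : ℕ}

lemma neg_one_pow_gl (hk : 0 < k + 1) (x y : Fin (k + 1) → Bool) :
    (-1 : ℝ) ^ (gl (k + 1) hk x y).toNat =
      (-1) ^ (x 0).toNat * (-1) ^ (y 0).toNat * walsh (Fin.tail x) (Fin.tail y) := by
  have hmod : ∀ n : ℕ, (decide (n % 2 = 1)).toNat = n % 2 := fun n => by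
    rcases Nat.mod_two_eq_zero_or_one n with h | h <;> simp [h]
  have htail : ∑ i ∈ univ.filter (fun i : Fin (k + 1) => 1 ≤ (i : ℕ)), (x i).toNat * (y i).toNat
      = ∑ i, (Fin.tail x i).toNat * (Fin.tail y i).toNat := by
    rw [sum_filter, Fin.sum_univ_succ]
    simp [Fin.tail]
  rw [gl, hmod, ← neg_one_pow_eq_pow_mod_two, htail, pow_add, pow_add, walsh, Fin.mk_zero]

noncomputable def fiberSign (A : Finset (Fin (k + 1) → Bool)) (x : Fin k → Bool) : ℝ :=
  ∑ a : Bool, if Fin.cons a x ∈ A then (-1) ^ a.toNat else 0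

lemma fiberSign_sq_le_one (A : Finset (Fin (k + 1) → Bool)) (x : Fin k → Bool) :
    fiberSign A x ^ 2 ≤ 1 := by
  simp only [fiberSign, Fintype.sum_bool]
  split_ifs <;> norm_num

lemma sum_fiberSign_sq_le (A : Finset (Fin (k + 1) → Bool)) :
    ∑ x, fiberSign A x ^ 2 ≤ 2 ^ k := by
  simpa using sum_le_card_nsmul univ _ 1 fun x _ => fiberSign_sq_le_one A x

lemma sum_neg_one_pow_head_mul_tail (A : Finset (Fin (k + 1) → Bool)) (F : (Fin k → Bool) → ℝ) :
    ∑ x ∈ A, (-1) ^ (x 0).toNat * F (Fin.tail x) = ∑ x, fiberSign A x * F x := by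
  calc ∑ x ∈ A, (-1) ^ (x 0).toNat * F (Fin.tail x)
      = ∑ x, if x ∈ A then (-1) ^ (x 0).toNat * F (Fin.tail x) else 0 :=
        (Fintype.sum_ite_mem A _).symm
    _ = ∑ p : Bool × (Fin k → Bool),
          if Fin.cons p.1 p.2 ∈ A then (-1) ^ p.1.toNat * F p.2 else 0 :=
        ((Fin.consEquiv fun _ => Bool).sum_comp _).symm
    _ = ∑ x, fiberSign A x * F x := by
        rw [Fintype.sum_prod_type, sum_comm]
        simp only [fiberSign, sum_mul, ite_mul, zero_mul]

lemma sum_neg_one_pow_gl_eq (hk : 0 < k + 1) (A B : Finset (Fin (k + 1) → Bool)) :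
    ∑ p ∈ A ×ˢ B, (-1 : ℝ) ^ (gl (k + 1) hk p.1 p.2).toNat =
      ∑ x, ∑ y, fiberSign A x * fiberSign B y * walsh x y := by
  calc ∑ p ∈ A ×ˢ B, (-1 : ℝ) ^ (gl (k + 1) hk p.1 p.2).toNat
      = ∑ x ∈ A, (-1) ^ (x 0).toNat *
          ∑ y ∈ B, (-1) ^ (y 0).toNat * walsh (Fin.tail x) (Fin.tail y) := by
        simp only [sum_product, neg_one_pow_gl, mul_sum, mul_assoc]
    _ = ∑ x ∈ A, (-1) ^ (x 0).toNat * ∑ y, fiberSign B y * walsh (Fin.tail x) y := by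
        simp only [sum_neg_one_pow_head_mul_tail B (walsh _)]
    _ = ∑ x, ∑ y, fiberSign A x * fiberSign B y * walsh x y := by
        rw [sum_neg_one_pow_head_mul_tail A fun x => ∑ y, fiberSign B y * walsh x y]
        simp only [mul_sum, mul_assoc]

lemma sq_sum_neg_one_pow_gl_le (hk : 0 < k + 1) (A B : Finset (Fin (k + 1) → Bool)) :
    (∑ p ∈ A ×ˢ B, (-1 : ℝ) ^ (gl (k + 1) hk p.1 p.2).toNat) ^ 2 ≤ (2 ^ k) ^ 3 := by
  rw [sum_neg_one_pow_gl_eq]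
  calc _ ≤ 2 ^ k * (∑ x, fiberSign A x ^ 2) * ∑ y, fiberSign B y ^ 2 := by
        simpa using sq_sum_sum_mul_walsh_le (fiberSign A) (fiberSign B)
    _ ≤ 2 ^ k * 2 ^ k * 2 ^ k := by
        gcongr
        · exact sum_fiberSign_sq_le A
        · exact sum_fiberSign_sq_le B
    _ = (2 ^ k) ^ 3 := by ring

end FirstBitSplit

lemma abs_div_le_of_sq_le (k : ℕ) {N : ℝ} (hN : N ^ 2 ≤ (2 ^ k) ^ 3) :
    |N| / ((2 : ℝ) ^ (k + 1)) ^ 2 ≤ (2 : ℝ) ^ (-((((k + 1 : ℕ) : ℝ) + 3) / 2)) := by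
  have habs : |N| ≤ (2 : ℝ) ^ ((3 * k : ℝ) / 2) := by
    calc |N| ≤ √((2 ^ k) ^ 3) := Real.abs_le_sqrt hN
      _ = (2 : ℝ) ^ ((3 * k : ℝ) / 2) := by
        rw [Real.sqrt_eq_rpow, ← pow_mul, ← Real.rpow_natCast, ← Real.rpow_mul zero_le_two]
        push_cast
        ring_nf
  rw [div_le_iff₀ (by positivity)]
  calc |N| ≤ (2 : ℝ) ^ ((3 * k : ℝ) / 2) := habs
    _ = (2 : ℝ) ^ (-((((k + 1 : ℕ) : ℝ) + 3) / 2)) * ((2 : ℝ) ^ (k + 1)) ^ 2 := by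
      rw [← pow_mul, ← Real.rpow_natCast _ ((k + 1) * 2), ← Real.rpow_add zero_lt_two]
      push_cast
      ring_nf

/-- For every integer `ℓ ≥ 1`, the discrepancy of `g_ℓ` on every combinatorial
rectangle is at most `2^{-(ℓ+3)/2}`; that is, `disc(g_ℓ) ≤ 2^{-(ℓ+3)/2}`. -/
theorem stmt8 (ℓ : ℕ) (hℓ : 0 < ℓ) :
    ∀ A B : Finset (Fin ℓ → Bool),
      discR (gl ℓ hℓ) A B ≤ (2 : ℝ) ^ (-(((ℓ : ℝ) + 3) / 2)) := by
  obtain ⟨k, rfl⟩ : ∃ k, ℓ = k + 1 := ⟨ℓ - 1, by omega⟩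
  intro A B
  rw [discR_eq_abs_sum, Fintype.card_fun, Fintype.card_bool, Fintype.card_fin]
  simp only [Nat.cast_pow, Nat.cast_ofNat]
  exact abs_div_le_of_sq_le k (sq_sum_neg_one_pow_gl_le hℓ A B)
end

section
/- For every integer ℓ ≥ 1, let N be the 2^ℓ × 2^ℓ matrix with rows and columns indexed by {0,1}^ℓ defined by N_{x,y} = (−1)^{g_ℓ(x,y)}, where g_ℓ(x,y) = x₁ + y₁ + Σ_{i=2}^{ℓ} x_i·y_i (mod 2). Then for all sets A, B ⊆ {0,1}^ℓ, the absolute value of the sum Σ_{x∈A, y∈B} N_{x,y} is at most 2^{3(ℓ−1)/2}. -/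
/-!
Splitting off the first coordinate, `(-1)^{g(x,y)} = (-1)^{x₁} (-1)^{y₁} H(x', y')`, where `x'`
is the tail of `x` and `H` is the Walsh–Hadamard matrix of size `2^{ℓ-1}`. Hence the sum over
`A × B` is the bilinear form `aᵀ H b`, where `a u = Σ_{x ∈ A, x' = u} (-1)^{x₁}` lies in
`{-1, 0, 1}`, and similarly for `b`. Since `Hᵀ H = 2^{ℓ-1} I`, Cauchy–Schwarz (Lindsey's lemma)
gives `(aᵀ H b)² ≤ 2^{ℓ-1} ‖a‖² ‖b‖² ≤ 2^{3(ℓ-1)}`.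
-/

open Finset Matrix

theorem sq_dotProduct_mulVec_le {m n : Type*} [Fintype m] [Fintype n] [DecidableEq n]
    (H : Matrix m n ℝ) (c : ℝ) (hH : Hᵀ * H = c • 1) (a : m → ℝ) (b : n → ℝ) :
    (a ⬝ᵥ H *ᵥ b) ^ 2 ≤ c * (a ⬝ᵥ a) * (b ⬝ᵥ b) := by
  have hHb : H *ᵥ b ⬝ᵥ H *ᵥ b = c * (b ⬝ᵥ b) := by
    rw [dotProduct_mulVec, ← vecMul_transpose, vecMul_vecMul, hH, vecMul_smul, vecMul_one,
      smul_dotProduct, smul_eq_mul]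
  calc (a ⬝ᵥ H *ᵥ b) ^ 2 ≤ (a ⬝ᵥ a) * (H *ᵥ b ⬝ᵥ H *ᵥ b) := by
        simpa only [dotProduct, sq] using sum_mul_sq_le_sq_mul_sq univ a (H *ᵥ b)
    _ = c * (a ⬝ᵥ a) * (b ⬝ᵥ b) := by rw [hHb]; ring

def walshHadamard (ι : Type*) [Fintype ι] : Matrix (ι → Bool) (ι → Bool) ℝ :=
  Matrix.of fun u v => ∏ i, (-1 : ℝ) ^ ((u i).toNat * (v i).toNat)

theorem sum_neg_one_pow_mul_neg_one_pow (b b' : Bool) :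
    ∑ c : Bool, (-1 : ℝ) ^ (c.toNat * b.toNat) * (-1 : ℝ) ^ (c.toNat * b'.toNat)
      = if b = b' then 2 else 0 := by
  cases b <;> cases b' <;> norm_num

theorem walshHadamard_transpose_mul_self (ι : Type*) [Fintype ι] [DecidableEq ι] :
    (walshHadamard ι)ᵀ * walshHadamard ι = (2 ^ Fintype.card ι : ℝ) • 1 := by
  ext v v'
  calc ((walshHadamard ι)ᵀ * walshHadamard ι) v v'
      = ∑ u : ι → Bool, ∏ i, (-1 : ℝ) ^ ((u i).toNat * (v i).toNat)
          * (-1 : ℝ) ^ ((u i).toNat * (v' i).toNat) := by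
        simp only [mul_apply, transpose_apply, walshHadamard, of_apply, prod_mul_distrib]
    _ = ∏ i, if v i = v' i then (2 : ℝ) else 0 := by
        rw [← Fintype.prod_sum fun i (c : Bool) =>
          (-1 : ℝ) ^ (c.toNat * (v i).toNat) * (-1 : ℝ) ^ (c.toNat * (v' i).toNat)]
        exact Fintype.prod_congr _ _ fun i => sum_neg_one_pow_mul_neg_one_pow (v i) (v' i)
    _ = ((2 ^ Fintype.card ι : ℝ) • (1 : Matrix (ι → Bool) (ι → Bool) ℝ)) v v' := by
        simp only [Fintype.prod_ite_zero, ← funext_iff, prod_const, card_univ, Matrix.smul_apply,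
          one_apply, smul_eq_mul, mul_ite, mul_one, mul_zero]

def signedFiberCount {m : ℕ} (A : Finset (Fin (m + 1) → Bool)) (u : Fin m → Bool) : ℝ :=
  ∑ b : Bool, if Fin.cons b u ∈ A then (-1 : ℝ) ^ b.toNat else 0

theorem sum_neg_one_pow_mul_tail {m : ℕ} (A : Finset (Fin (m + 1) → Bool))
    (G : (Fin m → Bool) → ℝ) :
    ∑ x ∈ A, (-1 : ℝ) ^ (x 0).toNat * G (Fin.tail x) = signedFiberCount A ⬝ᵥ G := by
  rw [← Fintype.sum_extend_by_zero, ← (Fin.consEquiv fun _ => Bool).sum_comp,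
    Fintype.sum_prod_type, Finset.sum_comm]
  simp only [dotProduct, signedFiberCount, Finset.sum_mul, ite_mul, zero_mul]
  rfl

theorem sq_signedFiberCount_le_one {m : ℕ} (A : Finset (Fin (m + 1) → Bool))
    (u : Fin m → Bool) : signedFiberCount A u ^ 2 ≤ 1 := by
  simp only [signedFiberCount, Fintype.sum_bool]
  split_ifs <;> norm_num

theorem dotProduct_self_signedFiberCount_le {m : ℕ} (A : Finset (Fin (m + 1) → Bool)) :
    signedFiberCount A ⬝ᵥ signedFiberCount A ≤ 2 ^ m := by
  calc signedFiberCount A ⬝ᵥ signedFiberCount A ≤ ∑ _u : Fin m → Bool, (1 : ℝ) :=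
        Finset.sum_le_sum fun u _ => (sq _).symm.trans_le (sq_signedFiberCount_le_one A u)
    _ = 2 ^ m := by simp

theorem neg_one_pow_tail_sum_eq_walshHadamard {m : ℕ} (x y : Fin (m + 1) → Bool) :
    (-1 : ℝ) ^ ∑ i ∈ univ.filter (fun i : Fin (m + 1) => 1 ≤ (i : ℕ)), (x i).toNat * (y i).toNat
      = walshHadamard (Fin m) (Fin.tail x) (Fin.tail y) := by
  rw [sum_filter, Fin.sum_univ_succ]
  simp [walshHadamard, Fin.tail, prod_pow_eq_pow_sum]

theorem ite_decide_mod_two_eq_one (n : ℕ) :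
    (if decide (n % 2 = 1) then (-1 : ℝ) else 1) = (-1 : ℝ) ^ n := by
  rw [neg_one_pow_eq_pow_mod_two]
  rcases Nat.mod_two_eq_zero_or_one n with h | h <;> simp [h]

theorem ite_gl_eq (m : ℕ) (h : 0 < m + 1) (x y : Fin (m + 1) → Bool) :
    (if gl (m + 1) h x y then (-1 : ℝ) else 1)
      = (-1 : ℝ) ^ (x 0).toNat * ((-1 : ℝ) ^ (y 0).toNat
          * walshHadamard (Fin m) (Fin.tail x) (Fin.tail y)) := by
  rw [gl, ite_decide_mod_two_eq_one, pow_add, pow_add, neg_one_pow_tail_sum_eq_walshHadamard,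
    mul_assoc]
  rfl

theorem sum_sum_ite_gl_eq (m : ℕ) (h : 0 < m + 1) (A B : Finset (Fin (m + 1) → Bool)) :
    ∑ x ∈ A, ∑ y ∈ B, (if gl (m + 1) h x y then (-1 : ℝ) else 1)
      = signedFiberCount A ⬝ᵥ walshHadamard (Fin m) *ᵥ signedFiberCount B := by
  simp_rw [ite_gl_eq, ← Finset.mul_sum, sum_neg_one_pow_mul_tail B,
    dotProduct_comm (signedFiberCount B)]
  exact sum_neg_one_pow_mul_tail A (walshHadamard (Fin m) *ᵥ signedFiberCount B)

theorem two_rpow_three_mul_div_two_sq (m : ℕ) :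
    ((2 : ℝ) ^ (3 * (m : ℝ) / 2)) ^ 2 = (2 ^ m) ^ 3 := by
  rw [← Real.rpow_natCast, ← Real.rpow_mul zero_le_two, ← pow_mul,
    ← Real.rpow_natCast 2 (m * 3)]
  push_cast
  ring_nf

/-- For the matrix `N` with entries `N_{x,y} = (-1)^{g_ℓ(x,y)}`, the sum of the
entries over any combinatorial rectangle `A × B` is at most `2^{3(ℓ-1)/2}` in
absolute value. -/
theorem stmt9 (ℓ : ℕ) (hℓ : 0 < ℓ) (A B : Finset (Fin ℓ → Bool)) :
    |∑ x ∈ A, ∑ y ∈ B, (if gl ℓ hℓ x y then (-1 : ℝ) else 1)|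
      ≤ (2 : ℝ) ^ (3 * ((ℓ : ℝ) - 1) / 2) := by
  obtain ⟨m, rfl⟩ : ∃ m, ℓ = m + 1 := ⟨ℓ - 1, by omega⟩
  rw [sum_sum_ite_gl_eq, Nat.cast_add_one, add_sub_cancel_right]
  refine abs_le_of_sq_le_sq ?_ (by positivity)
  calc (signedFiberCount A ⬝ᵥ walshHadamard (Fin m) *ᵥ signedFiberCount B) ^ 2
      ≤ 2 ^ m * (signedFiberCount A ⬝ᵥ signedFiberCount A)
          * (signedFiberCount B ⬝ᵥ signedFiberCount B) := by
        simpa only [Fintype.card_fin] using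
          sq_dotProduct_mulVec_le _ _ (walshHadamard_transpose_mul_self (Fin m)) _ _
    _ ≤ 2 ^ m * 2 ^ m * 2 ^ m := by
        gcongr
        · exact sum_nonneg fun _ _ => mul_self_nonneg _
        · exact dotProduct_self_signedFiberCount_le A
        · exact dotProduct_self_signedFiberCount_le B
    _ = _ := by rw [two_rpow_three_mul_div_two_sq]; ring
end

section
/- (Lindsey's Lemma) Let H be an n × n Hadamard matrix. Then for every set of r rows and every set of s columns of H, the sum of the entries of H in the corresponding r × s submatrix is at most √(r·s·n) in absolute value. -/
/-- **Lindsey's Lemma.** Let `H` be an `n × n` Hadamard matrix (a `±1` matrix with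
pairwise orthogonal rows and pairwise orthogonal columns). Then for every set `R`
of rows and every set `C` of columns, the sum of the entries of `H` in the
corresponding submatrix is at most `√(|R| · |C| · n)` in absolute value. -/
theorem stmt10 (n : ℕ) (H : Matrix (Fin n) (Fin n) ℝ)
    (hpm : ∀ i j, H i j = 1 ∨ H i j = -1)
    (hrows : ∀ i i', i ≠ i' → ∑ j, H i j * H i' j = 0)
    (hcols : ∀ j j', j ≠ j' → ∑ i, H i j * H i j' = 0)
    (R C : Finset (Fin n)) :
    |∑ i ∈ R, ∑ j ∈ C, H i j|
      ≤ Real.sqrt ((R.card : ℝ) * (C.card : ℝ) * (n : ℝ)) := by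
  set f : Fin n → ℝ := fun i => ∑ j ∈ C, H i j with hf
  have hsq : ∀ i j, H i j * H i j = 1 := by
    intro i j; rcases hpm i j with h | h <;> rw [h] <;> norm_num
  have keyA : ∑ i, (f i) ^ 2 = (C.card : ℝ) * n := by
    have h1 : ∑ i, (f i) ^ 2 = ∑ i, ∑ j ∈ C, ∑ j' ∈ C, H i j * H i j' := by
      simp [hf, sq, Finset.sum_mul_sum]
    rw [h1, Finset.sum_comm]
    have h2 : ∀ j, ∑ i, ∑ j' ∈ C, H i j * H i j' = ∑ j' ∈ C, ∑ i, H i j * H i j' :=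
      fun j => Finset.sum_comm
    rw [Finset.sum_congr rfl (fun j _ => h2 j)]
    have : ∀ j ∈ C, ∑ j' ∈ C, ∑ i, H i j * H i j' = (n : ℝ) := by
      intro j hj
      rw [Finset.sum_eq_single j]
      · simp [hsq]
      · intro j' hj' hne; exact hcols j j' (Ne.symm hne)
      · intro h; exact absurd hj h
    rw [Finset.sum_congr rfl this]
    simp [mul_comm]
  have keyB : (∑ i ∈ R, f i) ^ 2 ≤ (R.card : ℝ) * ((C.card : ℝ) * n) := by
    calc (∑ i ∈ R, f i) ^ 2 ≤ (R.card : ℝ) * ∑ i ∈ R, (f i) ^ 2 :=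
          sq_sum_le_card_mul_sum_sq
      _ ≤ (R.card : ℝ) * ∑ i, (f i) ^ 2 := by
          have := Finset.sum_le_sum_of_subset_of_nonneg (Finset.subset_univ R)
            (fun i _ _ => sq_nonneg (f i))
          exact mul_le_mul_of_nonneg_left this (Nat.cast_nonneg _)
      _ = (R.card : ℝ) * ((C.card : ℝ) * n) := by rw [keyA]
  have habs : |∑ i ∈ R, f i| ≤ Real.sqrt ((R.card : ℝ) * (C.card : ℝ) * n) := by
    rw [← Real.sqrt_sq_eq_abs]
    apply Real.sqrt_le_sqrt
    rw [mul_assoc]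
    exact keyB
  exact habs
end

section
/- Let H = (V,E) be a finite simple graph, let t ≥ 1 be an integer, and let 𝒞 be a t-biclique covering of H of size k. Let E' ⊆ E be the set of edges of H that are covered by 𝒞 exactly t times. Then the graph H' = (V, E') satisfies bp(H') ≤ (2k)^t. -/
/-- A partition of the edge set of a simple graph `G` into `k` bicliques. -/
def IsBicliquePartition {V : Type*} (G : SimpleGraph V) (k : ℕ)
    (A B : Fin k → Set V) : Prop :=
  (∀ i, ∀ x ∈ A i, ∀ y ∈ B i, G.Adj x y) ∧
  ∀ x y, G.Adj x y → ∃! i, (x ∈ A i ∧ y ∈ B i) ∨ (y ∈ A i ∧ x ∈ B i)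

/-- The biclique partition number of a graph. -/
noncomputable def bp {V : Type*} (G : SimpleGraph V) : ℕ :=
  sInf {k | ∃ A B : Fin k → Set V, IsBicliquePartition G k A B}

/-- The number of times the collection of bicliques `(A i, B i)` covers the
(oriented versions of the) edge `{x, y}`: the biclique `(A i, B i)` covers the
oriented edge `(x, y)` when `x ∈ A i` and `y ∈ B i`. -/
def covCount {V : Type*} [DecidableEq V] {k : ℕ}
    (A B : Fin k → Finset V) (x y : V) : ℕ :=
  (Finset.univ.filter fun i => x ∈ A i ∧ y ∈ B i).card +
  (Finset.univ.filter fun i => y ∈ A i ∧ x ∈ B i).card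


/-!
Each biclique `(A i, B i)` yields two oriented bicliques, `(A i, B i)` and `(B i, A i)`; an
oriented edge `(x, y)` of `H'` lies in exactly `t` of these `2k` oriented bicliques, and reversing
the edge reverses all of them. For a `t`-set `S` of oriented bicliques, the common sources and
common targets of `S` form a biclique of `H'`: an edge in it is covered at least `#S = t` times.
An edge of `H'` lies in this biclique exactly when `S` is its set of covering oriented bicliques in
one of its two orientations, so keeping one `t`-set out of each pair `{S, reverse S}` gives a
biclique partition of `H'` of size at most `(2k choose t) ≤ (2k)^t`.
-/

open Finset

theorem existsUnique_eq_or_eq_of_le_involutive {α β : Type*} [LinearOrder β] {f : α → β}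
    (hf : Function.Injective f) {σ : α → α} (hσ : Function.Involutive σ) {p : α → Prop}
    (hp : ∀ a, p a → p (σ a)) {a : α} (ha : p a) :
    ∃! s : {s // p s ∧ f s ≤ f (σ s)}, s.1 = a ∨ s.1 = σ a := by
  let _ : LinearOrder α := LinearOrder.lift' f hf
  have hmin : ∀ s, s ≤ σ s → s = a ∨ s = σ a → s = min a (σ a) := by
    rintro s hs (rfl | rfl)
    · exact (min_eq_left hs).symm
    · rw [hσ] at hs
      exact (min_eq_right hs).symm
  obtain h | h := min_choice a (σ a)
  · exact ⟨⟨a, ha, (min_eq_left_iff.1 h : a ≤ σ a)⟩, Or.inl rfl,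
      fun s hs => Subtype.ext ((hmin s.1 s.2.2 hs).trans h)⟩
  · exact ⟨⟨σ a, hp a ha, (hσ a).symm ▸ (min_eq_right_iff.1 h : σ a ≤ a)⟩, Or.inr rfl,
      fun s hs => Subtype.ext ((hmin s.1 s.2.2 hs).trans h)⟩

theorem bp_le_card_of_partition {V ι : Type*} [Fintype ι] (G : SimpleGraph V) (A B : ι → Set V)
    (hbic : ∀ i, ∀ x ∈ A i, ∀ y ∈ B i, G.Adj x y)
    (hpart : ∀ x y, G.Adj x y → ∃! i, (x ∈ A i ∧ y ∈ B i) ∨ (y ∈ A i ∧ x ∈ B i)) :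
    bp G ≤ Fintype.card ι := by
  let e := Fintype.equivFin ι
  refine Nat.sInf_le ⟨A ∘ e.symm, B ∘ e.symm, fun j => hbic _, fun x y hxy => ?_⟩
  obtain ⟨i, hi, huniq⟩ := hpart x y hxy
  exact ⟨e i, by simpa using hi, fun j hj => e.symm_apply_eq.1 (huniq _ hj)⟩

theorem covCount_comm {V : Type*} [DecidableEq V] {k : ℕ} (A B : Fin k → Finset V) (x y : V) :
    covCount A B x y = covCount A B y x :=
  add_comm _ _

namespace OrientedBiclique

variable {V : Type*} {k : ℕ}

def reverse : Equiv.Perm (Fin k × Bool) := (Equiv.refl _).prodCongr Equiv.boolNot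

theorem map_reverse_involutive :
    Function.Involutive (Finset.map (reverse (k := k)).toEmbedding) := by
  intro S
  ext ⟨i, b⟩
  simp [reverse, Equiv.boolNot]

def srcSide (A B : Fin k → Finset V) (o : Fin k × Bool) : Finset V :=
  if o.2 then A o.1 else B o.1

def tgtSide (A B : Fin k → Finset V) (o : Fin k × Bool) : Finset V :=
  if o.2 then B o.1 else A o.1

section Cover

variable [DecidableEq V] (A B : Fin k → Finset V)

def coverSet (x y : V) : Finset (Fin k × Bool) :=
  univ.filter fun o => x ∈ srcSide A B o ∧ y ∈ tgtSide A B o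

@[simp]
theorem mem_coverSet {x y : V} {o : Fin k × Bool} :
    o ∈ coverSet A B x y ↔ x ∈ srcSide A B o ∧ y ∈ tgtSide A B o := by
  simp [coverSet]

theorem card_coverSet (x y : V) : #(coverSet A B x y) = covCount A B x y := by
  rw [coverSet, card_filter, Fintype.sum_prod_type]
  simp only [Fintype.sum_bool]
  rw [sum_add_distrib, covCount, card_filter, card_filter]
  simp [srcSide, tgtSide, and_comm]

theorem coverSet_swap (x y : V) :
    coverSet A B y x = (coverSet A B x y).map reverse.toEmbedding := by
  ext ⟨i, b⟩
  cases b <;> simp [srcSide, tgtSide, reverse, Equiv.boolNot, and_comm]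

theorem adj_of_mem_coverSet {H : SimpleGraph V} (hbic : ∀ i, ∀ x ∈ A i, ∀ y ∈ B i, H.Adj x y)
    {x y : V} {o : Fin k × Bool} (ho : o ∈ coverSet A B x y) : H.Adj x y := by
  obtain ⟨i, b⟩ := o
  cases b <;> simp only [mem_coverSet, srcSide, tgtSide, Bool.false_eq_true, ↓reduceIte] at ho
  · exact (hbic i y ho.2 x ho.1).symm
  · exact hbic i x ho.1 y ho.2

def commonSrc (S : Finset (Fin k × Bool)) : Set V := {x | ∀ o ∈ S, x ∈ srcSide A B o}

def commonTgt (S : Finset (Fin k × Bool)) : Set V := {y | ∀ o ∈ S, y ∈ tgtSide A B o}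

theorem mem_commonSrc_and_mem_commonTgt_iff {S : Finset (Fin k × Bool)} {x y : V} :
    x ∈ commonSrc A B S ∧ y ∈ commonTgt A B S ↔ S ⊆ coverSet A B x y := by
  simp only [commonSrc, commonTgt, Set.mem_ofPred_eq, subset_iff, mem_coverSet, ← forall₂_and]

end Cover

end OrientedBiclique

section ExactCover

open OrientedBiclique

variable {V : Type*} [DecidableEq V] {k t : ℕ} {H : SimpleGraph V} {A B : Fin k → Finset V}

theorem fromRel_covCount_eq_adj_iff {x y : V} :
    (SimpleGraph.fromRel fun x y => H.Adj x y ∧ covCount A B x y = t).Adj x y ↔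
      H.Adj x y ∧ covCount A B x y = t := by
  rw [SimpleGraph.fromRel_adj, H.adj_comm y x, covCount_comm A B y x, or_self]
  exact and_iff_right_of_imp fun h => h.1.ne

theorem fromRel_covCount_eq_adj_of_mem_commonSrc_of_mem_commonTgt
    (hbic : ∀ i, ∀ x ∈ A i, ∀ y ∈ B i, H.Adj x y)
    (hcov : ∀ x y, H.Adj x y → covCount A B x y ≤ t)
    {S : Finset (Fin k × Bool)} (hS : #S = t) (hSne : S.Nonempty) {x y : V}
    (hx : x ∈ commonSrc A B S) (hy : y ∈ commonTgt A B S) :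
    (SimpleGraph.fromRel fun x y => H.Adj x y ∧ covCount A B x y = t).Adj x y := by
  have hsub := (mem_commonSrc_and_mem_commonTgt_iff A B).1 ⟨hx, hy⟩
  obtain ⟨o, ho⟩ := hSne
  have hadj : H.Adj x y := adj_of_mem_coverSet A B hbic (hsub ho)
  refine fromRel_covCount_eq_adj_iff.2 ⟨hadj, le_antisymm (hcov x y hadj) ?_⟩
  calc t = #S := hS.symm
    _ ≤ #(coverSet A B x y) := card_le_card hsub
    _ = covCount A B x y := card_coverSet A B x y

theorem mem_commonSrc_and_mem_commonTgt_or_iff {S : Finset (Fin k × Bool)} (hS : #S = t)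
    {x y : V} (hxy : covCount A B x y = t) :
    (x ∈ commonSrc A B S ∧ y ∈ commonTgt A B S) ∨ (y ∈ commonSrc A B S ∧ x ∈ commonTgt A B S) ↔
      S = coverSet A B x y ∨ S = (coverSet A B x y).map reverse.toEmbedding := by
  have hxy' : #(coverSet A B x y) ≤ #S := by rw [card_coverSet, hxy, hS]
  have hyx' : #(coverSet A B y x) ≤ #S := by rw [card_coverSet, ← covCount_comm, hxy, hS]
  rw [mem_commonSrc_and_mem_commonTgt_iff, mem_commonSrc_and_mem_commonTgt_iff,
    subset_iff_eq_of_card_le hxy', subset_iff_eq_of_card_le hyx', coverSet_swap A B x y]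

end ExactCover

open OrientedBiclique in
theorem stmt12_general {V : Type*} [DecidableEq V] (H : SimpleGraph V)
    (t k : ℕ) (ht : 1 ≤ t) (A B : Fin k → Finset V)
    (hbic : ∀ i, ∀ x ∈ A i, ∀ y ∈ B i, H.Adj x y)
    (hcov : ∀ x y, H.Adj x y → 1 ≤ covCount A B x y ∧ covCount A B x y ≤ t) :
    bp (SimpleGraph.fromRel fun x y => H.Adj x y ∧ covCount A B x y = t)
      ≤ (2 * k) ^ t := by
  -- The condition `e S ≤ e (reverse S)` keeps one set out of each pair `{S, reverse S}`.
  let e := Fintype.equivFin (Finset (Fin k × Bool))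
  let ι := {S : Finset (Fin k × Bool) // #S = t ∧ e S ≤ e (S.map reverse.toEmbedding)}
  calc _ ≤ Fintype.card ι := by
        refine bp_le_card_of_partition _ (fun S => commonSrc A B S.1)
          (fun S => commonTgt A B S.1) ?_ ?_
        · intro S x hx y hy
          exact fromRel_covCount_eq_adj_of_mem_commonSrc_of_mem_commonTgt hbic
            (fun x y h => (hcov x y h).2) S.2.1 (card_pos.1 (by rw [S.2.1]; exact ht)) hx hy
        · intro x y hxy
          have hxt := (fromRel_covCount_eq_adj_iff.1 hxy).2
          exact (existsUnique_congr fun S => mem_commonSrc_and_mem_commonTgt_or_iff S.2.1 hxt).2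
            (existsUnique_eq_or_eq_of_le_involutive e.injective map_reverse_involutive
              (p := (#· = t)) (fun S hS => (card_map _).trans hS)
              ((card_coverSet A B x y).trans hxt))
    _ ≤ Fintype.card {S : Finset (Fin k × Bool) // #S = t} :=
        Fintype.card_subtype_mono _ _ fun _ h => h.1
    _ = (2 * k).choose t := by simp [Fintype.card_finset_len, mul_comm]
    _ ≤ (2 * k) ^ t := Nat.choose_le_pow _ _

/-- If `𝒞 = (A i, B i)_{i < k}` is a `t`-biclique covering of a finite simple graph
`H` (each edge is covered at least once and at most `t` times), and `H'` is the
subgraph of `H` consisting of the edges covered exactly `t` times, then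
`bp(H') ≤ (2k)^t`. -/
theorem stmt12 {V : Type*} [Fintype V] [DecidableEq V] (H : SimpleGraph V)
    (t k : ℕ) (ht : 1 ≤ t) (A B : Fin k → Finset V)
    (hbic : ∀ i, ∀ x ∈ A i, ∀ y ∈ B i, H.Adj x y)
    (hcov : ∀ x y, H.Adj x y → 1 ≤ covCount A B x y ∧ covCount A B x y ≤ t) :
    bp (SimpleGraph.fromRel fun x y => H.Adj x y ∧ covCount A B x y = t)
      ≤ (2 * k) ^ t :=
  stmt12_general H t k ht A B hbic hcov
end

section
/- Let M be an n × n 0,1 matrix. Define the graph H on vertex set [n] × [n] (loops allowed) in which vertices (i₁,j₁) and (i₂,j₂) (not necessarily distinct) are adjacent iff M_{i₁,j₂} = 1 or M_{i₂,j₁} = 1, and let H₀ be the subgraph of H induced on V₀ = {(i,j) : M_{i,j} = 0}, which is a simple graph. Then χ(H₀) ≥ Rbool(complement of M). -/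
/-- A cover of the ones of a `0,1` matrix `M` by `k` monochromatic combinatorial
rectangles `A t × B t`. -/
def OnesCover {α β : Type*} (M : α → β → Bool) (k : ℕ)
    (A : Fin k → Set α) (B : Fin k → Set β) : Prop :=
  (∀ t, ∀ x ∈ A t, ∀ y ∈ B t, M x y = true) ∧
  ∀ x y, M x y = true → ∃ t, x ∈ A t ∧ y ∈ B t

/-- The Boolean rank of a `0,1` matrix. -/
noncomputable def Rbool {α β : Type*} (M : α → β → Bool) : ℕ :=
  sInf {k | ∃ A B, OnesCover M k A B}

/-- The chromatic number of a graph: the least number of colors of a proper coloring. -/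
noncomputable def chromNum {V : Type*} (G : SimpleGraph V) : ℕ :=
  sInf {k | G.Colorable k}

/-!
A colour class `S` of `H₀` is an independent set of zeros of `M`, and independence of
`(i₁,j₁), (i₂,j₂) ∈ S` says `M i₁ j₂ = M i₂ j₁ = 0`. Hence the rectangle
`{i | (i,j) ∈ S for some j} × {j | (i,j) ∈ S for some i}` consists of zeros of `M`, i.e. of
ones of its complement, and the rectangles of all colour classes cover every zero of `M`.
-/

theorem colorable_chromNum {V : Type*} [Finite V] (G : SimpleGraph V) :
    G.Colorable (chromNum G) := by
  have := Fintype.ofFinite V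
  exact Nat.sInf_mem (s := {k | G.Colorable k}) ⟨_, G.colorable_of_fintype⟩

section ZeroGraph

variable {α β : Type*} (M : α → β → Bool)

/-- The graph `H₀` of a (possibly rectangular) `0,1` matrix `M`. -/
def zeroGraph : SimpleGraph {p : α × β // M p.1 p.2 = false} :=
  SimpleGraph.fromRel fun p q => M p.1.1 q.1.2 = true ∨ M q.1.1 p.1.2 = true

variable {M}

theorem zeroGraph.apply_eq_false_of_color_eq {γ : Type*} (C : (zeroGraph M).Coloring γ)
    {p q : {p : α × β // M p.1 p.2 = false}} (hpq : C p = C q) : M p.1.1 q.1.2 = false := by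
  by_cases h : p = q
  · subst h
    exact p.2
  · have hnadj : ¬ (zeroGraph M).Adj p q := fun hadj => C.valid hadj hpq
    simp only [zeroGraph, SimpleGraph.fromRel_adj, not_and, not_or] at hnadj
    simpa using (hnadj h).1.1

def colorRows {k : ℕ} (C : (zeroGraph M).Coloring (Fin k)) (t : Fin k) : Set α :=
  {i | ∃ p, C p = t ∧ p.1.1 = i}

def colorCols {k : ℕ} (C : (zeroGraph M).Coloring (Fin k)) (t : Fin k) : Set β :=
  {j | ∃ p, C p = t ∧ p.1.2 = j}

theorem onesCover_compl_colorRows_colorCols {k : ℕ} (C : (zeroGraph M).Coloring (Fin k)) :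
    OnesCover (fun i j => !M i j) k (colorRows C) (colorCols C) := by
  constructor
  · rintro t _ ⟨p, hp, rfl⟩ _ ⟨q, hq, rfl⟩
    simp [zeroGraph.apply_eq_false_of_color_eq C (hp.trans hq.symm)]
  · intro i j hij
    have hM : M i j = false := by simpa using hij
    exact ⟨C ⟨(i, j), hM⟩, ⟨⟨(i, j), hM⟩, rfl, rfl⟩, ⟨⟨(i, j), hM⟩, rfl, rfl⟩⟩

theorem rbool_compl_le_of_colorable {k : ℕ} (h : (zeroGraph M).Colorable k) :
    Rbool (fun i j => !M i j) ≤ k := by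
  obtain ⟨C⟩ := h
  exact Nat.sInf_le ⟨_, _, onesCover_compl_colorRows_colorCols C⟩

end ZeroGraph

/-- Let `H` be the graph (loops allowed) on `[n] × [n]` where `(i₁,j₁)` and
`(i₂,j₂)` are adjacent iff `M_{i₁,j₂} = 1` or `M_{i₂,j₁} = 1`, and let `H₀` be the
(simple) subgraph of `H` induced on `V₀ = {(i,j) : M_{i,j} = 0}`. Then
`χ(H₀) ≥ Rbool(complement M)`. -/
theorem stmt13 (n : ℕ) (M : Fin n → Fin n → Bool) :
    Rbool (fun i j => !(M i j)) ≤
      chromNum (SimpleGraph.fromRel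
        fun p q : {p : Fin n × Fin n // M p.1 p.2 = false} =>
          M p.1.1 q.1.2 = true ∨ M q.1.1 p.1.2 = true) :=
  rbool_compl_le_of_colorable (colorable_chromNum (zeroGraph M))
end

section
/- Let M be an n × n 0,1 matrix with k = Rbin(M), and define the graph H on vertex set [n] × [n] (loops allowed) in which vertices (i₁,j₁) and (i₂,j₂) (not necessarily distinct) are adjacent iff M_{i₁,j₂} = 1 or M_{i₂,j₁} = 1. Then there exist pairs of vertex sets (A_t, B_t) for t ∈ [k], each a biclique of H, such that for every ordered pair of vertices ((i₁,j₁),(i₂,j₂)) ∈ ([n]×[n])², the number of indices t ∈ [k] with ((i₁,j₁),(i₂,j₂)) ∈ A_t × B_t equals M_{i₁,j₂}. In particular, this collection is a 2-biclique covering of H of size k in which an edge between distinct adjacent vertices (i₁,j₁),(i₂,j₂) is covered twice, in the two opposite orientations, if both M_{i₁,j₂} = 1 and M_{i₂,j₁} = 1 hold, and covered once if only one of them holds, and every loop of H is covered once. -/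
/-! The rank partition of `M` is lifted to `[n] × [n]` by `A'_t = A_t × [n]` and
`B'_t = [n] × B_t`: then `(p, q) ∈ A'_t × B'_t` iff `(p.1, q.2) ∈ A_t × B_t`, so the number
of such `t` is `M_{p.1, q.2}`, and each `A'_t × B'_t` is a biclique because `M_{p.1, q.2} = 1`
on it. -/

namespace OnesPartition

variable {α β : Type*}

/-- The partition of the ones into `1 × 1` rectangles, one for each one of `M`. -/
theorem exists_of_finite [Finite α] [Finite β] (M : α → β → Bool) :
    ∃ k A B, OnesPartition M k A B := by
  have : Fintype {p : α × β // M p.1 p.2 = true} := Fintype.ofFinite _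
  let e := (Fintype.equivFin {p : α × β // M p.1 p.2 = true}).symm
  refine ⟨_, fun t => {(e t).1.1}, fun t => {(e t).1.2}, ?_, fun x y hxy => ?_⟩
  · rintro t x rfl y rfl
    exact (e t).2
  · refine ⟨e.symm ⟨(x, y), hxy⟩, by simp, ?_⟩
    rintro t ⟨rfl, rfl⟩
    simp

theorem exists_rbin [Finite α] [Finite β] (M : α → β → Bool) :
    ∃ A B, OnesPartition M (Rbin M) A B :=
  Nat.sInf_mem (exists_of_finite M)

theorem card_filter_mem_eq_toNat {M : α → β → Bool} {k : ℕ}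
    {A : Fin k → Set α} {B : Fin k → Set β}
    (h : OnesPartition M k A B) (x : α) (y : β) [DecidablePred fun t => x ∈ A t ∧ y ∈ B t] :
    (Finset.univ.filter fun t => x ∈ A t ∧ y ∈ B t).card = (M x y).toNat := by
  cases hxy : M x y with
  | false =>
    rw [Bool.toNat_false, Finset.card_eq_zero, Finset.filter_eq_empty_iff]
    rintro t - ⟨hx, hy⟩
    simp [h.1 t x hx y hy] at hxy
  | true =>
    obtain ⟨t, ht, hunique⟩ := h.2 x y hxy
    rw [Bool.toNat_true, Finset.card_eq_one]
    exact ⟨t, Finset.eq_singleton_iff_unique_mem.2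
      ⟨Finset.mem_filter.2 ⟨Finset.mem_univ t, ht⟩,
        fun s hs => hunique s (Finset.mem_filter.1 hs).2⟩⟩

end OnesPartition

/-- Let `H` be the graph (loops allowed) on `[n] × [n]` in which `(i₁,j₁)` and
`(i₂,j₂)` (not necessarily distinct) are adjacent iff `M_{i₁,j₂} = 1` or
`M_{i₂,j₁} = 1`. Then, with `k = Rbin M`, there are vertex-set pairs
`(A t, B t)`, `t < k`, each a biclique of `H`, such that for every ordered pair
of vertices `(p, q)` the number of indices `t` with `(p, q) ∈ A t × B t` equals
`M_{p.1, q.2}` (in particular, the collection is a `2`-biclique covering of `H`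
of size `k` covering each edge once or twice according to whether one or both of
`M_{i₁,j₂} = 1`, `M_{i₂,j₁} = 1` hold, and covering every loop once). -/
theorem stmt14 (n : ℕ) (M : Fin n → Fin n → Bool) :
    ∃ A B : Fin (Rbin M) → Finset (Fin n × Fin n),
      (∀ t, ∀ p ∈ A t, ∀ q ∈ B t,
        M p.1 q.2 = true ∨ M q.1 p.2 = true) ∧
      ∀ p q : Fin n × Fin n,
        (Finset.univ.filter fun t => p ∈ A t ∧ q ∈ B t).card
          = (M p.1 q.2).toNat := by
  classical
  obtain ⟨A, B, hAB⟩ := OnesPartition.exists_rbin M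
  refine ⟨fun t => Finset.univ.filter (·.1 ∈ A t), fun t => Finset.univ.filter (·.2 ∈ B t),
    fun t p hp q hq => Or.inl ?_, fun p q => ?_⟩
  · exact hAB.1 t _ (Finset.mem_filter.1 hp).2 _ (Finset.mem_filter.1 hq).2
  · simpa only [Finset.mem_filter, Finset.mem_univ, true_and] using
      hAB.card_filter_mem_eq_toNat p.1 q.2
end

section
/- Let ℓ ≥ 1 and n ≥ 1 be integers and t ≥ 0 a real number, and let (X',Y') be a pair of (finitely supported) random variables over {0,1}^{ℓ·n} × {0,1}^{ℓ·n} such that for every set I ⊆ [n] it holds that H∞(X'_I, Y'_I) ≥ |I|·(2ℓ−2) − t. Then for every real δ with δ < 1 − 1/ℓ, there exist a set I ⊆ [n] of size |I| ≤ t/(2·((1−δ)·ℓ − 1)) and an assignment α ∈ {0,1}^{2·ℓ·|I|} attained with positive probability by (X'_I, Y'_I), such that: (1) the random variable (X'',Y'') obtained from (X',Y') by conditioning on the event (X'_I, Y'_I) = α has the property that its projection (X''_{Ī}, Y''_{Ī}) to the blocks of Ī = [n] \ I is δ-dense; and (2) if X''' and Y''' are independent random variables distributed as X'' and Y'' respectively,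 then (X'''_{Ī}, Y'''_{Ī}) is (2δ−1)-dense. -/
/-- The probability of the event `E` under the finitely supported probability mass
function `μ`. -/
noncomputable def PrE {D : Type*} [Fintype D] (μ : D → ℝ) (E : Set D) : ℝ :=
  ∑ p, Set.indicator E μ p

lemma PrE_nonneg {D : Type*} [Fintype D] (μ : D → ℝ) (hμ0 : ∀ p, 0 ≤ μ p) (S : Set D) :
    0 ≤ PrE μ S :=
  Finset.sum_nonneg fun p _ => Set.indicator_nonneg (fun x _ => hμ0 x) p

lemma PrE_univ {D : Type*} [Fintype D] (μ : D → ℝ) (hμ1 : ∑ p, μ p = 1) :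
    PrE μ Set.univ = 1 := by
  unfold PrE; simp [hμ1]

lemma PrE_split {n : ℕ} {F D : Type*} [Fintype D] [Fintype F] [DecidableEq F]
    (μ : D → ℝ) (J : Finset (Fin n)) (S : Set D) (g : D → Fin n → F) :
    PrE μ S = ∑ y : {x // x ∈ J} → F,
      PrE μ (S ∩ {p | ∀ i, ∀ h : i ∈ J, g p i = y ⟨i, h⟩}) := by
  classical
  unfold PrE
  rw [Finset.sum_comm]
  refine Finset.sum_congr rfl fun p _ => ?_
  by_cases hp : p ∈ S
  · rw [Set.indicator_of_mem hp]
    rw [Finset.sum_eq_single (fun i : {x // x ∈ J} => g p i.1)]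
    · refine (Set.indicator_of_mem ?_ μ).symm
      exact ⟨hp, fun i h => rfl⟩
    · intro y _ hy
      refine Set.indicator_of_notMem ?_ μ
      rintro ⟨-, h2⟩
      exact hy (funext fun i => (h2 i.1 i.2).symm)
    · intro h; exact absurd (Finset.mem_univ _) h
  · rw [Set.indicator_of_notMem hp]
    exact (Finset.sum_eq_zero fun y _ =>
      Set.indicator_of_notMem (fun h => hp h.1) μ).symm

/-- Let `(X', Y')` be a pair of random variables over `{0,1}^{ℓn} × {0,1}^{ℓn}`
(vectors viewed as `n` blocks of length `ℓ`, modelled by the pmf `μ`) such that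
`H∞(X'_I, Y'_I) ≥ |I|·(2ℓ−2) − t` for every `I ⊆ [n]` (equivalently, every value of
`(X'_I, Y'_I)` has probability at most `2^{-(|I|(2ℓ−2)−t)}`). Then for every
`δ < 1 − 1/ℓ` there are a set `I` with `|I| ≤ t/(2((1−δ)ℓ−1))` and an assignment `α`
to the `I`-blocks of positive probability such that:
(1) conditioned on `(X'_I, Y'_I) = α`, the projection of the pair to the blocks of
`Ī = [n] \ I` is `δ`-dense (every `J ⊆ Ī` and value `β` satisfies
`Pr[proj_J = β | agree] ≤ 2^{-δ·2ℓ|J|}`, stated multiplied through by the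
conditioning probability); and
(2) for independent copies `X'''`, `Y'''` of the conditioned marginals, the pair
`(X'''_Ī, Y'''_Ī)` is `(2δ−1)`-dense (again stated multiplied through by the square
of the conditioning probability). -/
theorem stmt15 (ℓ n : ℕ) (hℓ : 1 ≤ ℓ) (hn : 1 ≤ n) (t : ℝ) (ht : 0 ≤ t)
    (μ : ((Fin n → Fin ℓ → Bool) × (Fin n → Fin ℓ → Bool)) → ℝ)
    (hμ0 : ∀ p, 0 ≤ μ p) (hμ1 : ∑ p, μ p = 1)
    (hent : ∀ (I : Finset (Fin n))
        (α : (Fin n → Fin ℓ → Bool) × (Fin n → Fin ℓ → Bool)),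
      PrE μ {p | ∀ i ∈ I, p.1 i = α.1 i ∧ p.2 i = α.2 i}
        ≤ (2 : ℝ) ^ (-((I.card : ℝ) * (2 * (ℓ : ℝ) - 2) - t)))
    (δ : ℝ) (hδ : δ < 1 - 1 / (ℓ : ℝ)) :
    ∃ (I : Finset (Fin n))
      (α : (Fin n → Fin ℓ → Bool) × (Fin n → Fin ℓ → Bool)),
      (I.card : ℝ) ≤ t / (2 * ((1 - δ) * (ℓ : ℝ) - 1)) ∧
      0 < PrE μ {p | ∀ i ∈ I, p.1 i = α.1 i ∧ p.2 i = α.2 i} ∧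
      (∀ J : Finset (Fin n), Disjoint J I →
        ∀ β : (Fin n → Fin ℓ → Bool) × (Fin n → Fin ℓ → Bool),
          PrE μ {p | (∀ i ∈ I, p.1 i = α.1 i ∧ p.2 i = α.2 i) ∧
              ∀ i ∈ J, p.1 i = β.1 i ∧ p.2 i = β.2 i}
            ≤ (2 : ℝ) ^ (-(δ * (2 * (ℓ : ℝ) * (J.card : ℝ)))) *
              PrE μ {p | ∀ i ∈ I, p.1 i = α.1 i ∧ p.2 i = α.2 i}) ∧
      (∀ J : Finset (Fin n), Disjoint J I →
        ∀ β : (Fin n → Fin ℓ → Bool) × (Fin n → Fin ℓ → Bool),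
          PrE μ {p | (∀ i ∈ I, p.1 i = α.1 i ∧ p.2 i = α.2 i) ∧
              ∀ i ∈ J, p.1 i = β.1 i} *
          PrE μ {p | (∀ i ∈ I, p.1 i = α.1 i ∧ p.2 i = α.2 i) ∧
              ∀ i ∈ J, p.2 i = β.2 i}
            ≤ (2 : ℝ) ^ (-((2 * δ - 1) * (2 * (ℓ : ℝ) * (J.card : ℝ)))) *
              (PrE μ {p | ∀ i ∈ I, p.1 i = α.1 i ∧ p.2 i = α.2 i}) ^ 2) := by
  classical
  have hℓR : (1:ℝ) ≤ (ℓ:ℝ) := by exact_mod_cast hℓ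
  have hℓpos : (0:ℝ) < (ℓ:ℝ) := by linarith
  obtain ⟨q, -, hq⟩ := Finset.exists_max_image (Finset.univ :
      Finset (Finset (Fin n) × ((Fin n → Fin ℓ → Bool) × (Fin n → Fin ℓ → Bool))))
    (fun q => PrE μ {p | ∀ i ∈ q.1, p.1 i = q.2.1 i ∧ p.2 i = q.2.2 i} *
      (2:ℝ) ^ (δ * (2 * (ℓ:ℝ) * (q.1.card : ℝ)))) Finset.univ_nonempty
  obtain ⟨I, α⟩ := q
  have hq' : ∀ (K : Finset (Fin n)) (γ : (Fin n → Fin ℓ → Bool) × (Fin n → Fin ℓ → Bool)),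
      PrE μ {p | ∀ i ∈ K, p.1 i = γ.1 i ∧ p.2 i = γ.2 i} *
        (2:ℝ) ^ (δ * (2 * (ℓ:ℝ) * (K.card : ℝ)))
      ≤ PrE μ {p | ∀ i ∈ I, p.1 i = α.1 i ∧ p.2 i = α.2 i} *
        (2:ℝ) ^ (δ * (2 * (ℓ:ℝ) * (I.card : ℝ))) := by
    intro K γ
    exact hq (K, γ) (Finset.mem_univ _)
  set PI := PrE μ {p | ∀ i ∈ I, p.1 i = α.1 i ∧ p.2 i = α.2 i} with hPI
  have hPI0 : 0 ≤ PI := PrE_nonneg μ hμ0 _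
  have ha : (0:ℝ) < (2:ℝ) ^ (δ * (2 * (ℓ:ℝ) * (I.card : ℝ))) :=
    Real.rpow_pos_of_pos two_pos _
  have hone : (1:ℝ) ≤ PI * (2:ℝ) ^ (δ * (2 * (ℓ:ℝ) * (I.card : ℝ))) := by
    have h := hq' ∅ α
    have h1 : {p : (Fin n → Fin ℓ → Bool) × (Fin n → Fin ℓ → Bool) |
        ∀ i ∈ (∅ : Finset (Fin n)), p.1 i = α.1 i ∧ p.2 i = α.2 i} = Set.univ := by
      ext p; simp
    rw [h1, PrE_univ μ hμ1] at h
    simpa using h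
  have hpos : 0 < PI := by
    by_contra hP
    push_neg at hP
    have : PI = 0 := le_antisymm hP hPI0
    rw [this, zero_mul] at hone
    linarith
  -- Part 1 : density
  have key : ∀ J : Finset (Fin n), Disjoint J I →
      ∀ β : (Fin n → Fin ℓ → Bool) × (Fin n → Fin ℓ → Bool),
      PrE μ {p | (∀ i ∈ I, p.1 i = α.1 i ∧ p.2 i = α.2 i) ∧
          ∀ i ∈ J, p.1 i = β.1 i ∧ p.2 i = β.2 i}
        ≤ (2 : ℝ) ^ (-(δ * (2 * (ℓ : ℝ) * (J.card : ℝ)))) * PI := by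
    intro J hJ β
    set γ : (Fin n → Fin ℓ → Bool) × (Fin n → Fin ℓ → Bool) :=
      (fun i => if i ∈ I then α.1 i else β.1 i,
       fun i => if i ∈ I then α.2 i else β.2 i) with hγ
    have hset : {p : (Fin n → Fin ℓ → Bool) × (Fin n → Fin ℓ → Bool) |
        (∀ i ∈ I, p.1 i = α.1 i ∧ p.2 i = α.2 i) ∧
          ∀ i ∈ J, p.1 i = β.1 i ∧ p.2 i = β.2 i} =
        {p | ∀ i ∈ I ∪ J, p.1 i = γ.1 i ∧ p.2 i = γ.2 i} := by
      ext p
      simp only [Set.mem_setOf_eq, Finset.mem_union]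
      constructor
      · rintro ⟨h1, h2⟩ i hi
        rcases hi with hi | hi
        · simp [hγ, hi, (h1 i hi).1, (h1 i hi).2]
        · have hiI : i ∉ I := Finset.disjoint_left.mp hJ hi
          simp [hγ, hiI, (h2 i hi).1, (h2 i hi).2]
      · intro h
        constructor
        · intro i hi
          have := h i (Or.inl hi)
          simpa [hγ, hi] using this
        · intro i hi
          have hiI : i ∉ I := Finset.disjoint_left.mp hJ hi
          have := h i (Or.inr hi)
          simpa [hγ, hiI] using this
    rw [hset]
    have hmax := hq' (I ∪ J) γ
    have hb : (0:ℝ) < (2:ℝ) ^ (δ * (2 * (ℓ:ℝ) * (J.card : ℝ))) :=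
      Real.rpow_pos_of_pos two_pos _
    have hcard : (((I ∪ J).card : ℕ) : ℝ) = (I.card : ℝ) + (J.card : ℝ) := by
      rw [Finset.card_union_of_disjoint hJ.symm]; push_cast; ring
    have hsplit : (2:ℝ) ^ (δ * (2 * (ℓ:ℝ) * (((I ∪ J).card : ℕ) : ℝ))) =
        (2:ℝ) ^ (δ * (2 * (ℓ:ℝ) * (I.card : ℝ))) *
        (2:ℝ) ^ (δ * (2 * (ℓ:ℝ) * (J.card : ℝ))) := by
      rw [← Real.rpow_add two_pos]
      congr 1
      rw [hcard]; ring
    rw [hsplit] at hmax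
    rw [Real.rpow_neg (by norm_num : (0:ℝ) ≤ 2), inv_mul_eq_div, le_div_iff₀ hb]
    refine le_of_mul_le_mul_right ?_ ha
    calc PrE μ {p | ∀ i ∈ I ∪ J, p.1 i = γ.1 i ∧ p.2 i = γ.2 i} *
          (2:ℝ) ^ (δ * (2 * (ℓ:ℝ) * (J.card : ℝ))) *
          (2:ℝ) ^ (δ * (2 * (ℓ:ℝ) * (I.card : ℝ)))
        = PrE μ {p | ∀ i ∈ I ∪ J, p.1 i = γ.1 i ∧ p.2 i = γ.2 i} *
          ((2:ℝ) ^ (δ * (2 * (ℓ:ℝ) * (I.card : ℝ))) *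
           (2:ℝ) ^ (δ * (2 * (ℓ:ℝ) * (J.card : ℝ)))) := by ring
      _ ≤ PI * (2:ℝ) ^ (δ * (2 * (ℓ:ℝ) * (I.card : ℝ))) := hmax
      _ = PI * (2:ℝ) ^ (δ * (2 * (ℓ:ℝ) * (I.card : ℝ))) := rfl
  -- size bound
  have hsize : (I.card : ℝ) ≤ t / (2 * ((1 - δ) * (ℓ : ℝ) - 1)) := by
    have hlb : (2:ℝ) ^ (-(δ * (2 * (ℓ:ℝ) * (I.card : ℝ)))) ≤ PI := by
      rw [Real.rpow_neg (by norm_num : (0:ℝ) ≤ 2), inv_eq_one_div, div_le_iff₀ ha]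
      linarith
    have hub := hent I α
    rw [← hPI] at hub
    have hexp : -(δ * (2 * (ℓ:ℝ) * (I.card : ℝ))) ≤ -((I.card : ℝ) * (2 * (ℓ:ℝ) - 2) - t) := by
      have := hlb.trans hub
      exact (Real.rpow_le_rpow_left_iff (by norm_num : (1:ℝ) < 2)).mp this
    have hδ' : 1 / (ℓ:ℝ) < 1 - δ := by linarith
    have hinv : 1 / (ℓ:ℝ) * (ℓ:ℝ) = 1 := by field_simp
    have hden : 0 < (1 - δ) * (ℓ:ℝ) - 1 := by nlinarith
    rw [le_div_iff₀ (by linarith : (0:ℝ) < 2 * ((1 - δ) * (ℓ : ℝ) - 1))]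
    nlinarith [hexp]
  refine ⟨I, α, hsize, hpos, key, ?_⟩
  -- Part 2 : independent copies
  intro J hJ β
  have hcardy : (Fintype.card ({x // x ∈ J} → Fin ℓ → Bool) : ℝ) =
      (2:ℝ) ^ ((ℓ:ℝ) * (J.card : ℝ)) := by
    rw [Fintype.card_fun, Fintype.card_fun, Fintype.card_coe, Fintype.card_bool,
      Fintype.card_fin, ← pow_mul]
    push_cast
    rw [← Real.rpow_natCast 2 (ℓ * J.card)]
    congr 1
    push_cast
    ring
  have hbd : ∀ (g : ((Fin n → Fin ℓ → Bool) × (Fin n → Fin ℓ → Bool)) → Fin n → Fin ℓ → Bool)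
      (S : Set ((Fin n → Fin ℓ → Bool) × (Fin n → Fin ℓ → Bool))),
      (∀ y : {x // x ∈ J} → Fin ℓ → Bool,
        ∃ β' : (Fin n → Fin ℓ → Bool) × (Fin n → Fin ℓ → Bool),
          S ∩ {p | ∀ i, ∀ h : i ∈ J, g p i = y ⟨i, h⟩} =
            {p | (∀ i ∈ I, p.1 i = α.1 i ∧ p.2 i = α.2 i) ∧
              ∀ i ∈ J, p.1 i = β'.1 i ∧ p.2 i = β'.2 i}) →
      PrE μ S ≤ (2:ℝ) ^ ((ℓ:ℝ) * (J.card : ℝ)) *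
        ((2 : ℝ) ^ (-(δ * (2 * (ℓ : ℝ) * (J.card : ℝ)))) * PI) := by
    intro g S hS
    calc PrE μ S = ∑ y : {x // x ∈ J} → Fin ℓ → Bool,
          PrE μ (S ∩ {p | ∀ i, ∀ h : i ∈ J, g p i = y ⟨i, h⟩}) :=
        PrE_split μ J S g
      _ ≤ ∑ _y : {x // x ∈ J} → Fin ℓ → Bool,
          ((2 : ℝ) ^ (-(δ * (2 * (ℓ : ℝ) * (J.card : ℝ)))) * PI) := by
        refine Finset.sum_le_sum fun y _ => ?_
        obtain ⟨β', hβ'⟩ := hS y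
        rw [hβ']
        exact key J hJ β'
      _ = (Fintype.card ({x // x ∈ J} → Fin ℓ → Bool) : ℝ) *
          ((2 : ℝ) ^ (-(δ * (2 * (ℓ : ℝ) * (J.card : ℝ)))) * PI) := by
        rw [Finset.sum_const, Finset.card_univ, nsmul_eq_mul]
      _ = _ := by rw [hcardy]
  have hb1 : PrE μ {p | (∀ i ∈ I, p.1 i = α.1 i ∧ p.2 i = α.2 i) ∧
        ∀ i ∈ J, p.1 i = β.1 i}
      ≤ (2:ℝ) ^ ((ℓ:ℝ) * (J.card : ℝ)) *
        ((2 : ℝ) ^ (-(δ * (2 * (ℓ : ℝ) * (J.card : ℝ)))) * PI) := by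
    refine hbd (fun p => p.2) _ fun y => ?_
    refine ⟨(β.1, fun i => if h : i ∈ J then y ⟨i, h⟩ else β.2 i), ?_⟩
    ext p
    simp only [Set.mem_inter_iff, Set.mem_setOf_eq]
    constructor
    · rintro ⟨⟨hA, h1⟩, h2⟩
      refine ⟨hA, fun i hi => ⟨h1 i hi, ?_⟩⟩
      show p.2 i = if h : i ∈ J then y ⟨i, h⟩ else β.2 i
      rw [dif_pos hi]
      exact h2 i hi
    · rintro ⟨hA, h⟩
      refine ⟨⟨hA, fun i hi => (h i hi).1⟩, fun i hi => ?_⟩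
      have h2 := (h i hi).2
      change p.2 i = if h : i ∈ J then y ⟨i, h⟩ else β.2 i at h2
      rwa [dif_pos hi] at h2
  have hb2 : PrE μ {p | (∀ i ∈ I, p.1 i = α.1 i ∧ p.2 i = α.2 i) ∧
        ∀ i ∈ J, p.2 i = β.2 i}
      ≤ (2:ℝ) ^ ((ℓ:ℝ) * (J.card : ℝ)) *
        ((2 : ℝ) ^ (-(δ * (2 * (ℓ : ℝ) * (J.card : ℝ)))) * PI) := by
    refine hbd (fun p => p.1) _ fun y => ?_
    refine ⟨(fun i => if h : i ∈ J then y ⟨i, h⟩ else β.1 i, β.2), ?_⟩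
    ext p
    simp only [Set.mem_inter_iff, Set.mem_setOf_eq]
    constructor
    · rintro ⟨⟨hA, h1⟩, h2⟩
      refine ⟨hA, fun i hi => ⟨?_, h1 i hi⟩⟩
      show p.1 i = if h : i ∈ J then y ⟨i, h⟩ else β.1 i
      rw [dif_pos hi]
      exact h2 i hi
    · rintro ⟨hA, h⟩
      refine ⟨⟨hA, fun i hi => (h i hi).2⟩, fun i hi => ?_⟩
      have h2 := (h i hi).1
      change p.1 i = if h : i ∈ J then y ⟨i, h⟩ else β.1 i at h2
      rwa [dif_pos hi] at h2
  have hBnn : (0:ℝ) ≤ (2:ℝ) ^ ((ℓ:ℝ) * (J.card : ℝ)) *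
      ((2 : ℝ) ^ (-(δ * (2 * (ℓ : ℝ) * (J.card : ℝ)))) * PI) := by positivity
  have h1nn : (0:ℝ) ≤ PrE μ {p | (∀ i ∈ I, p.1 i = α.1 i ∧ p.2 i = α.2 i) ∧
      ∀ i ∈ J, p.1 i = β.1 i} := PrE_nonneg μ hμ0 _
  calc PrE μ {p | (∀ i ∈ I, p.1 i = α.1 i ∧ p.2 i = α.2 i) ∧
        ∀ i ∈ J, p.1 i = β.1 i} *
      PrE μ {p | (∀ i ∈ I, p.1 i = α.1 i ∧ p.2 i = α.2 i) ∧
        ∀ i ∈ J, p.2 i = β.2 i}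
      ≤ ((2:ℝ) ^ ((ℓ:ℝ) * (J.card : ℝ)) *
        ((2 : ℝ) ^ (-(δ * (2 * (ℓ : ℝ) * (J.card : ℝ)))) * PI)) *
        ((2:ℝ) ^ ((ℓ:ℝ) * (J.card : ℝ)) *
        ((2 : ℝ) ^ (-(δ * (2 * (ℓ : ℝ) * (J.card : ℝ)))) * PI)) :=
      mul_le_mul hb1 hb2 (PrE_nonneg μ hμ0 _) hBnn
    _ = (2 : ℝ) ^ (-((2 * δ - 1) * (2 * (ℓ : ℝ) * (J.card : ℝ)))) * PI ^ 2 := by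
      rw [show -((2 * δ - 1) * (2 * (ℓ : ℝ) * (J.card : ℝ)))
          = ((ℓ:ℝ) * (J.card : ℝ) + -(δ * (2 * (ℓ : ℝ) * (J.card : ℝ))))
            + ((ℓ:ℝ) * (J.card : ℝ) + -(δ * (2 * (ℓ : ℝ) * (J.card : ℝ)))) by ring,
        Real.rpow_add two_pos, Real.rpow_add two_pos]
      ring
end
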